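/- For any three points p, x, y in a metric space with p distinct from x and y, the model angles satisfy the inequality ∠̃(p;x,y)_{H²} ≤ ∠̃(p;x,y)_{E²} ≤ ∠̃(p;x,y)_{S²}, where the model angles are taken in the hyperbolic plane, Euclidean plane, and unit sphere respectively (the spherical one assumed to be defined, i.e., the perimeter of the triple is less than 2π). -/

import Mathlib

/-- The Euclidean model angle for side lengths `a`, `b` adjacent to the vertex and
opposite side `c`. -/
noncomputable def eAngle (a b c : ℝ) : ℝ :=
  Real.arccos ((a ^ 2 + b ^ 2 - c ^ 2) / (2 * a * b))

/-- The hyperbolic model angle (curvature −1), via the hyperbolic law of cosines. -/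
noncomputable def hAngle (a b c : ℝ) : ℝ :=
  Real.arccos ((Real.cosh a * Real.cosh b - Real.cosh c) / (Real.sinh a * Real.sinh b))

/-- The spherical model angle (unit sphere), via the spherical law of cosines. -/
noncomputable def sAngle (a b c : ℝ) : ℝ :=
  Real.arccos ((Real.cos c - Real.cos a * Real.cos b) / (Real.sin a * Real.sin b))

lemma arccos_anti {x y : ℝ} (h : x ≤ y) : Real.arccos y ≤ Real.arccos x := by
  unfold Real.arccos
  have := Real.monotone_arcsin h
  linarith

lemma sinh_le_mul_cosh {t : ℝ} (ht : 0 ≤ t) : Real.sinh t ≤ t * Real.cosh t := by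
  have hmono : MonotoneOn (fun x : ℝ => x * Real.cosh x - Real.sinh x) (Set.Ici 0) := by
    have hd : ∀ x : ℝ, HasDerivAt (fun x : ℝ => x * Real.cosh x - Real.sinh x)
        (x * Real.sinh x) x := by
      intro x
      have h1 : HasDerivAt (fun x : ℝ => x * Real.cosh x)
          (1 * Real.cosh x + x * Real.sinh x) x :=
        (hasDerivAt_id x).mul (Real.hasDerivAt_cosh x)
      have h2 : HasDerivAt (fun x : ℝ => x * Real.cosh x - Real.sinh x) _ x :=
        h1.sub (Real.hasDerivAt_sinh x)
      simpa using h2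
    apply monotoneOn_of_deriv_nonneg (convex_Ici 0)
    · exact (continuous_id.mul Real.continuous_cosh).sub Real.continuous_sinh |>.continuousOn
    · intro x hx
      exact (hd x).differentiableAt.differentiableWithinAt
    · intro x hx
      rw [(hd x).deriv]
      have hx' : 0 < x := by simpa using hx
      have : 0 ≤ Real.sinh x := Real.sinh_nonneg_iff.2 hx'.le
      positivity
  have h0 : (0 : ℝ) ∈ Set.Ici (0:ℝ) := Set.mem_Ici.2 le_rfl
  have := hmono h0 (Set.mem_Ici.2 ht) ht
  simpa using this

lemma sinh_ratio {t s : ℝ} (ht : 0 ≤ t) (hts : t ≤ s) :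
    s * Real.sinh t ≤ t * Real.sinh s := by
  have hd : 0 ≤ s - t := by linarith
  have h1 : Real.sinh s = Real.sinh t * Real.cosh (s - t) + Real.cosh t * Real.sinh (s - t) := by
    have := Real.sinh_add t (s - t)
    simpa using this
  have h2 : Real.sinh t ≤ t * Real.cosh t := sinh_le_mul_cosh ht
  have h3 : s - t ≤ Real.sinh (s - t) := Real.self_le_sinh_iff.2 hd
  have h4 : (1:ℝ) ≤ Real.cosh (s - t) := Real.one_le_cosh _
  have h5 : 0 ≤ Real.sinh t := Real.sinh_nonneg_iff.2 ht
  have h6 : (1:ℝ) ≤ Real.cosh t := Real.one_le_cosh t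
  nlinarith [mul_le_mul_of_nonneg_left h3 (mul_nonneg ht (by linarith : (0:ℝ) ≤ Real.cosh t)),
    mul_le_mul_of_nonneg_left h4 (mul_nonneg ht h5),
    mul_le_mul_of_nonneg_right h2 hd]

lemma sin_ratio {t s : ℝ} (ht : 0 ≤ t) (hts : t ≤ s) (hs : s ≤ Real.pi) :
    t * Real.sin s ≤ s * Real.sin t := by
  rcases eq_or_lt_of_le ht with h0 | h0
  · simp [← h0]
  rcases eq_or_lt_of_le hts with h1 | h1
  · rw [h1]
  have hs0 : 0 < s := lt_trans h0 h1
  have hcon := strictConcaveOn_sin_Icc.concaveOn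
  have hmem1 : s ∈ Set.Icc 0 Real.pi := ⟨hs0.le, hs⟩
  have hmem2 : (0:ℝ) ∈ Set.Icc 0 Real.pi := ⟨le_refl 0, Real.pi_pos.le⟩
  have ha : (0:ℝ) ≤ t / s := by positivity
  have hb : (0:ℝ) ≤ 1 - t / s := by
    have : t / s ≤ 1 := (div_le_one hs0).2 hts
    linarith
  have hab : t / s + (1 - t / s) = 1 := by ring
  have := hcon.2 hmem1 hmem2 ha hb hab
  simp only [smul_eq_mul, mul_zero, add_zero, Real.sin_zero] at this
  have hts' : t / s * s = t := by field_simp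
  rw [hts'] at this
  calc t * Real.sin s = s * (t / s * Real.sin s) := by field_simp
    _ ≤ s * Real.sin t := by
        apply mul_le_mul_of_nonneg_left _ hs0.le
        linarith

/-- For any three points `p, x, y` in a metric space with `p ≠ x`, `p ≠ y` and perimeter
less than `2π`, the model angles satisfy
`∠̃(p;x,y)_{H²} ≤ ∠̃(p;x,y)_{E²} ≤ ∠̃(p;x,y)_{S²}`. -/
theorem stmt_6 {X : Type*} [MetricSpace X] (p x y : X)
    (hpx : p ≠ x) (hpy : p ≠ y)
    (hper : dist p x + dist p y + dist x y < 2 * Real.pi) :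
    hAngle (dist p x) (dist p y) (dist x y) ≤ eAngle (dist p x) (dist p y) (dist x y)
      ∧ eAngle (dist p x) (dist p y) (dist x y)
        ≤ sAngle (dist p x) (dist p y) (dist x y) := by
  set a := dist p x with ha_def
  set b := dist p y with hb_def
  set c := dist x y with hc_def
  have ha : 0 < a := dist_pos.2 hpx
  have hb : 0 < b := dist_pos.2 hpy
  have hc : 0 ≤ c := dist_nonneg
  have tri1 : c ≤ a + b := by
    have := dist_triangle x p y
    rw [dist_comm x p] at this
    simpa [ha_def, hb_def, hc_def] using this
  have tri2 : a ≤ b + c := by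
    have := dist_triangle p y x
    rw [dist_comm y x] at this
    simpa [ha_def, hb_def, hc_def] using this
  have tri3 : b ≤ a + c := by
    have := dist_triangle p x y
    simpa [ha_def, hb_def, hc_def] using this
  have ha_pi : a < Real.pi := by linarith
  have hb_pi : b < Real.pi := by linarith
  set P := (c + a - b) / 2 with hP
  set Q := (c + b - a) / 2 with hQ
  have hP0 : 0 ≤ P := by rw [hP]; linarith
  have hPa : P ≤ a := by rw [hP]; linarith
  have hQ0 : 0 ≤ Q := by rw [hQ]; linarith
  have hQb : Q ≤ b := by rw [hQ]; linarith
  have ec : c = P + Q := by rw [hP, hQ]; ring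
  have eab : a - b = P - Q := by rw [hP, hQ]; ring
  -- hyperbolic identity
  have idh : Real.cosh a * Real.cosh b - Real.cosh c
      = Real.sinh a * Real.sinh b - 2 * Real.sinh P * Real.sinh Q := by
    have h1 : Real.cosh c = Real.cosh P * Real.cosh Q + Real.sinh P * Real.sinh Q := by
      rw [ec, Real.cosh_add]
    have h2 : Real.cosh (a - b) = Real.cosh P * Real.cosh Q - Real.sinh P * Real.sinh Q := by
      rw [eab, Real.cosh_sub]
    have h3 : Real.cosh (a - b) = Real.cosh a * Real.cosh b - Real.sinh a * Real.sinh b :=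
      Real.cosh_sub a b
    linarith
  -- spherical identity
  have ids : Real.cos c - Real.cos a * Real.cos b
      = Real.sin a * Real.sin b - 2 * Real.sin P * Real.sin Q := by
    have h1 : Real.cos c = Real.cos P * Real.cos Q - Real.sin P * Real.sin Q := by
      rw [ec, Real.cos_add]
    have h2 : Real.cos (a - b) = Real.cos P * Real.cos Q + Real.sin P * Real.sin Q := by
      rw [eab, Real.cos_sub]
    have h3 : Real.cos (a - b) = Real.cos a * Real.cos b + Real.sin a * Real.sin b :=
      Real.cos_sub a b
    linarith
  have hPQ : a ^ 2 + b ^ 2 - c ^ 2 = 2 * a * b - 4 * (P * Q) := by rw [hP, hQ]; ring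
  have sha : 0 < Real.sinh a := Real.sinh_pos_iff.2 ha
  have shb : 0 < Real.sinh b := Real.sinh_pos_iff.2 hb
  have sina : 0 < Real.sin a := Real.sin_pos_of_pos_of_lt_pi ha ha_pi
  have sinb : 0 < Real.sin b := Real.sin_pos_of_pos_of_lt_pi hb hb_pi
  have shP : 0 ≤ Real.sinh P := Real.sinh_nonneg_iff.2 hP0
  have shQ : 0 ≤ Real.sinh Q := Real.sinh_nonneg_iff.2 hQ0
  have sinP : 0 ≤ Real.sin P :=
    Real.sin_nonneg_of_nonneg_of_le_pi hP0 (le_trans hPa ha_pi.le)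
  have sinQ : 0 ≤ Real.sin Q :=
    Real.sin_nonneg_of_nonneg_of_le_pi hQ0 (le_trans hQb hb_pi.le)
  have k1 : a * Real.sinh P ≤ P * Real.sinh a := sinh_ratio hP0 hPa
  have k1' : b * Real.sinh Q ≤ Q * Real.sinh b := sinh_ratio hQ0 hQb
  have k2 : P * Real.sin a ≤ a * Real.sin P := sin_ratio hP0 hPa ha_pi.le
  have k2' : Q * Real.sin b ≤ b * Real.sin Q := sin_ratio hQ0 hQb hb_pi.le
  have prodh : (a * Real.sinh P) * (b * Real.sinh Q)
      ≤ (P * Real.sinh a) * (Q * Real.sinh b) :=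
    mul_le_mul k1 k1' (by positivity) (by positivity)
  have prods : (P * Real.sin a) * (Q * Real.sin b)
      ≤ (a * Real.sin P) * (b * Real.sin Q) :=
    mul_le_mul k2 k2' (by positivity) (by positivity)
  constructor
  · -- hAngle ≤ eAngle
    unfold hAngle eAngle
    apply arccos_anti
    rw [div_le_div_iff₀ (by positivity) (by positivity)]
    rw [idh, hPQ]
    linarith [prodh]
  · -- eAngle ≤ sAngle
    unfold eAngle sAngle
    apply arccos_anti
    rw [div_le_div_iff₀ (by positivity) (by positivity)]
    rw [ids, hPQ]
    linarith [prods]
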